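/- arXiv:2205.08035 — 8 statements merged into one kernel-verified Lean document; each statement's English description precedes it below -/
import Mathlib

section
/- For Λ > 0, the function σ ↦ h(σ,Λ) on (0,∞) is strictly increasing on (0, σ*) and strictly decreasing on (σ*, ∞), where σ* = (-3 + √(9 + 4Λ²))/2 is the unique positive root of Λ² - 3σ - σ² = 0; in particular σ* is the unique maximizer of h(·,Λ). -/
open Real MeasureTheory Set Filter Topology

noncomputable def fph (σ x : ℝ) : ℝ :=
  x * Real.exp (-(x - σ)^2 / (2*σ)) / Real.sqrt (2*Real.pi*σ^3)

noncomputable def erfc (z : ℝ) : ℝ :=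
  (2 / Real.sqrt Real.pi) * ∫ t in Set.Ioi z, Real.exp (-t^2)

noncomputable def fpH (σ x : ℝ) : ℝ :=
  (1/2) * (erfc ((x-σ)/Real.sqrt (2*σ)) + Real.exp (2*x) * erfc ((x+σ)/Real.sqrt (2*σ)))

noncomputable def kap (σ y x : ℝ) : ℝ :=
  Real.exp (-(y - x + σ)^2/(2*σ)) / Real.sqrt (2*Real.pi*σ) * (1 - Real.exp (-(2*x*y)/σ))

/-!
Writing `h(σ, x) = x · exp (ℓ_x σ)` with `ℓ_x = logProfile x`, the σ-derivative of the exponent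
is `ℓ_x'(σ) = (x² - 3σ - σ²) / (2σ²)`, and `x² - 3σ - σ² = (σ* - σ)(σ* + σ + 3)` for the positive
root `σ* = peak x` of the numerator. So `ℓ_x`, and with it `h(·, x)` when `x > 0`, increases strictly up to `σ*`
and decreases strictly after it.
-/

namespace Fph

noncomputable def logProfile (x σ : ℝ) : ℝ :=
  x - x ^ 2 / (2 * σ) - σ / 2 - 3 / 2 * log σ - log (2 * π) / 2

noncomputable def peak (x : ℝ) : ℝ :=
  (-3 + √(9 + 4 * x ^ 2)) / 2

lemma fph_eq_mul_exp_logProfile (x : ℝ) {σ : ℝ} (hσ : 0 < σ) :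
    fph σ x = x * exp (logProfile x σ) := by
  have hlog : log √(2 * π * σ ^ 3) = log (2 * π) / 2 + 3 / 2 * log σ := by
    rw [log_sqrt (by positivity), log_mul (by positivity) (by positivity), log_pow]
    push_cast
    ring
  rw [fph, mul_div_assoc, ← exp_log (show 0 < √(2 * π * σ ^ 3) by positivity), ← exp_sub, hlog,
    logProfile]
  congr 2
  field_simp
  ring

lemma hasDerivAt_logProfile (x : ℝ) {σ : ℝ} (hσ : 0 < σ) :
    HasDerivAt (logProfile x) ((x ^ 2 - 3 * σ - σ ^ 2) / (2 * σ ^ 2)) σ := by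
  have hquot := (hasDerivAt_const σ (x ^ 2)).div ((hasDerivAt_id σ).const_mul 2) (by positivity)
  have := ((((hasDerivAt_const σ x).sub hquot).sub ((hasDerivAt_id σ).div_const 2)).sub
    ((hasDerivAt_log hσ.ne').const_mul (3 / 2))).sub_const (log (2 * π) / 2)
  refine this.congr_deriv ?_
  simp only [id]
  field_simp
  ring

lemma sq_sub_three_mul_peak_sub_peak_sq (x : ℝ) : x ^ 2 - 3 * peak x - peak x ^ 2 = 0 := by
  have := sq_sqrt (show (0 : ℝ) ≤ 9 + 4 * x ^ 2 by positivity)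
  rw [peak]
  nlinarith

lemma peak_pos {x : ℝ} (hx : x ≠ 0) : 0 < peak x := by
  have : 3 < √(9 + 4 * x ^ 2) := by
    rw [lt_sqrt (by norm_num)]
    have : 0 < x ^ 2 := by positivity
    linarith
  rw [peak]
  linarith

lemma sq_sub_three_mul_sub_sq_eq_mul_peak (x σ : ℝ) :
    x ^ 2 - 3 * σ - σ ^ 2 = (peak x - σ) * (peak x + σ + 3) := by
  linear_combination sq_sub_three_mul_peak_sub_peak_sq x

lemma strictMonoOn_logProfile (x : ℝ) : StrictMonoOn (logProfile x) (Ioc 0 (peak x)) := by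
  refine strictMonoOn_of_hasDerivWithinAt_pos (convex_Ioc 0 _)
    (fun σ hσ => (hasDerivAt_logProfile x hσ.1).continuousAt.continuousWithinAt)
    (fun σ hσ => (hasDerivAt_logProfile x (interior_subset hσ).1).hasDerivWithinAt) ?_
  rw [interior_Ioc]
  rintro σ ⟨hσ, hσp⟩
  rw [sq_sub_three_mul_sub_sq_eq_mul_peak]
  exact div_pos (mul_pos (sub_pos.2 hσp) (by linarith)) (by positivity)

lemma strictAntiOn_logProfile {x : ℝ} (hx : x ≠ 0) :
    StrictAntiOn (logProfile x) (Ici (peak x)) := by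
  have hpos : ∀ σ ∈ Ici (peak x), 0 < σ := fun σ hσ => (peak_pos hx).trans_le hσ
  refine strictAntiOn_of_hasDerivWithinAt_neg (convex_Ici _)
    (fun σ hσ => (hasDerivAt_logProfile x (hpos σ hσ)).continuousAt.continuousWithinAt)
    (fun σ hσ => (hasDerivAt_logProfile x (hpos σ (interior_subset hσ))).hasDerivWithinAt) ?_
  rw [interior_Ici]
  intro σ hσp
  have hσ : 0 < σ := (peak_pos hx).trans hσp
  rw [sq_sub_three_mul_sub_sq_eq_mul_peak]
  have : 0 < peak x + σ + 3 := by linarith [peak_pos hx]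
  exact div_neg_of_neg_of_pos (mul_neg_of_neg_of_pos (sub_neg.2 hσp) this) (by positivity)

lemma strictMonoOn_fph {x : ℝ} (hx : 0 < x) :
    StrictMonoOn (fun σ => fph σ x) (Ioc 0 (peak x)) :=
  ((exp_strictMono.const_mul hx).comp_strictMonoOn (strictMonoOn_logProfile x)).congr
    fun _ hσ => (fph_eq_mul_exp_logProfile x hσ.1).symm

lemma strictAntiOn_fph {x : ℝ} (hx : 0 < x) :
    StrictAntiOn (fun σ => fph σ x) (Ici (peak x)) :=
  ((exp_strictMono.const_mul hx).comp_strictAntiOn (strictAntiOn_logProfile hx.ne')).congr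
    fun _ hσ => (fph_eq_mul_exp_logProfile x ((peak_pos hx.ne').trans_le hσ)).symm

end Fph

open Fph in
theorem fph_monotonicity (Λ : ℝ) (hΛ : 0 < Λ) :
    (Λ^2 - 3*((-3 + Real.sqrt (9 + 4*Λ^2))/2) - ((-3 + Real.sqrt (9 + 4*Λ^2))/2)^2 = 0) ∧
    (0 < (-3 + Real.sqrt (9 + 4*Λ^2))/2) ∧
    StrictMonoOn (fun σ => fph σ Λ) (Set.Ioc 0 ((-3 + Real.sqrt (9 + 4*Λ^2))/2)) ∧
    StrictAntiOn (fun σ => fph σ Λ) (Set.Ici ((-3 + Real.sqrt (9 + 4*Λ^2))/2)) ∧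
    (∀ σ, 0 < σ → σ ≠ (-3 + Real.sqrt (9 + 4*Λ^2))/2 →
      fph σ Λ < fph ((-3 + Real.sqrt (9 + 4*Λ^2))/2) Λ) := by
  change _ = 0 ∧ 0 < peak Λ ∧ StrictMonoOn _ (Ioc 0 (peak Λ)) ∧ StrictAntiOn _ (Ici (peak Λ)) ∧
    ∀ σ, 0 < σ → σ ≠ peak Λ → fph σ Λ < fph (peak Λ) Λ
  have hpeak := peak_pos hΛ.ne'
  refine ⟨sq_sub_three_mul_peak_sub_peak_sq Λ, hpeak, strictMonoOn_fph hΛ, strictAntiOn_fph hΛ,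
    fun σ hσ hne => ?_⟩
  rcases hne.lt_or_gt with hlt | hgt
  · exact strictMonoOn_fph hΛ ⟨hσ, hlt.le⟩ ⟨hpeak, le_rfl⟩ hlt
  · exact strictAntiOn_fph hΛ self_mem_Ici hgt.le hgt
end

section
/- For every x > 0, the function σ ↦ H(σ,x) = (1/2)(Erfc((x-σ)/√(2σ)) + e^{2x}·Erfc((x+σ)/√(2σ))) defined on (0,∞) is differentiable in σ with derivative ∂_σ H(σ,x) = h(σ,x) = x·exp(-(x-σ)²/(2σ))/√(2πσ³). -/
open Real MeasureTheory Set Filter Topology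

/-! The chain rule reduces the claim to the derivative of `erfc` and of the two arguments
`(x ∓ σ)/√(2σ)`. The two resulting Gaussian factors coincide after multiplication by `e^{2x}`,
since `2x - (x + σ)²/(2σ) = -(x - σ)²/(2σ)`, so the sum collapses to `h(σ, x)`. -/

theorem hasDerivAt_integral_Ioi {f : ℝ → ℝ} (hfc : Continuous f) (hfi : Integrable f) (z : ℝ) :
    HasDerivAt (fun w => ∫ t in Ioi w, f t) (-f z) z := by
  have hsplit : (fun w => ∫ t in Ioi w, f t) = fun w => (∫ t in Ioi 0, f t) - ∫ t in 0..w, f t := by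
    funext w
    rw [← intervalIntegral.integral_Ioi_sub_Ioi' hfi.integrableOn hfi.integrableOn, sub_sub_cancel]
  rw [hsplit, ← zero_sub]
  exact (hasDerivAt_const z _).sub <| intervalIntegral.integral_hasDerivAt_right
    (hfc.intervalIntegrable 0 z) hfc.aestronglyMeasurable.stronglyMeasurableAtFilter hfc.continuousAt

theorem hasDerivAt_erfc (z : ℝ) :
    HasDerivAt erfc (-(2 / √π) * exp (-z ^ 2)) z := by
  have hint : Integrable fun t : ℝ => exp (-t ^ 2) := by
    simpa using integrable_exp_neg_mul_sq (b := 1) one_pos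
  have := (hasDerivAt_integral_Ioi (by fun_prop) hint z).const_mul (2 / √π)
  rwa [mul_neg, ← neg_mul] at this

theorem hasDerivAt_add_mul_div_sqrt_two_mul (x c : ℝ) {σ : ℝ} (hσ : 0 < σ) :
    HasDerivAt (fun s => (x + c * s) / √(2 * s)) ((c * σ - x) / √(2 * σ) ^ 3) σ := by
  have hu : 0 < √(2 * σ) := sqrt_pos.mpr (by positivity)
  have hu2 : √(2 * σ) ^ 2 = 2 * σ := sq_sqrt (by positivity)
  have hsqrt : HasDerivAt (fun s => √(2 * s)) (2 / (2 * √(2 * σ))) σ :=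
    ((hasDerivAt_id σ).const_mul 2).sqrt (by positivity) |>.congr_deriv (by simp)
  refine ((((hasDerivAt_id σ).const_mul c).const_add x).div hsqrt hu.ne').congr_deriv ?_
  simp only [id, mul_one]
  field_simp
  linear_combination c * hu2

theorem exp_two_mul_mul_exp_neg_add_sq_div (x : ℝ) {σ : ℝ} (hσ : σ ≠ 0) :
    exp (2 * x) * exp (-((x + σ) ^ 2 / (2 * σ))) = exp (-((x - σ) ^ 2 / (2 * σ))) := by
  rw [← exp_add]
  congr 1
  field_simp
  ring

theorem div_sqrt_two_mul_sq (a : ℝ) {σ : ℝ} (hσ : 0 ≤ σ) : (a / √(2 * σ)) ^ 2 = a ^ 2 / (2 * σ) := by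
  rw [div_pow, sq_sqrt (by positivity)]

theorem sqrt_two_mul_pi_mul_pow_three {σ : ℝ} (hσ : 0 ≤ σ) :
    √(2 * π * σ ^ 3) = √π * √(2 * σ) ^ 3 / 2 := by
  rw [← sqrt_sq (by positivity : 0 ≤ √π * √(2 * σ) ^ 3 / 2), div_pow, mul_pow, sq_sqrt pi_pos.le,
    ← pow_mul, pow_mul', sq_sqrt (by positivity)]
  ring_nf

theorem fpH_hasDerivAt_general (x : ℝ) (σ : ℝ) (hσ : 0 < σ) :
    HasDerivAt (fun s => fpH s x) (fph σ x) σ := by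
  have herfc (c : ℝ) := (hasDerivAt_erfc _).comp σ (hasDerivAt_add_mul_div_sqrt_two_mul x c hσ)
  have hfpH := ((herfc (-1)).add ((herfc 1).const_mul (exp (2 * x)))).const_mul (1 / 2)
  simp only [Function.comp_def, neg_one_mul, ← sub_eq_add_neg, one_mul,
    div_sqrt_two_mul_sq _ hσ.le] at hfpH
  refine (hfpH : HasDerivAt (fun s => fpH s x) _ σ).congr_deriv ?_
  have hgauss := exp_two_mul_mul_exp_neg_add_sq_div x hσ.ne'
  have hu : 0 < √(2 * σ) := sqrt_pos.mpr (by positivity)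
  rw [fph, sqrt_two_mul_pi_mul_pow_three hσ.le, neg_div]
  field_simp
  linear_combination (x - σ) * hgauss

theorem fpH_hasDerivAt (x : ℝ) (hx : 0 < x) (σ : ℝ) (hσ : 0 < σ) :
    HasDerivAt (fun s => fpH s x) (fph σ x) σ :=
  fpH_hasDerivAt_general x σ hσ
end

section
/- For every Λ > 0, the hazard rate of the first-passage distribution converges to 1/2 at infinity: lim_{σ→∞} h(σ,Λ)/(1 - H(σ,Λ)) = 1/2. -/
open Real MeasureTheory Set Filter Topology

/-! With `a, b = (σ ∓ Λ) / √(2σ)` and `G c = ∫₀^∞ exp (-u² - 2cu) du`, so that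
`erfc c = (2 / √π) e^{-c²} G c`, the hazard rate is `(b - a) / (2σ (G a - G b))`.
Comparing `1 - e^{-t}` with `t`, and `e^{-u²}` with `1` and with `1 - u²`, under the
integral gives `1/(2b²) - 3/(4b⁴) ≤ (G a - G b) / (b - a) ≤ 1/(2a²)`; since `σ / a²` and
`σ / b²` both tend to `2`, the hazard rate is squeezed to `1/2`. -/

lemma integral_Ioi_comp_add_right (f : ℝ → ℝ) (c d : ℝ) :
    ∫ x in Ioi c, f (x + d) = ∫ x in Ioi (c + d), f x := by
  have := (measurableEmbedding_addRight d).setIntegral_map (μ := volume) f (Ioi (c + d))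
  rw [map_add_right_eq_self] at this
  simpa [preimage_add_const_Ioi] using this.symm

lemma integral_pow_mul_exp_neg_mul_Ioi (n : ℕ) {c : ℝ} (hc : 0 < c) :
    ∫ u in Ioi 0, u ^ n * exp (-(c * u)) = n.factorial / c ^ (n + 1) := by
  have h := integral_rpow_mul_exp_neg_mul_Ioi (a := n + 1) (by positivity) hc
  simp only [add_sub_cancel_right, rpow_natCast, Gamma_nat_eq_factorial] at h
  rw [h, ← Nat.cast_succ, rpow_natCast, one_div_pow, one_div_mul_eq_div]

lemma integrableOn_pow_mul_exp_neg_mul_Ioi (n : ℕ) {c : ℝ} (hc : 0 < c) :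
    IntegrableOn (fun u => u ^ n * exp (-(c * u))) (Ioi 0) :=
  Integrable.of_integral_ne_zero (by
    rw [integral_pow_mul_exp_neg_mul_Ioi n hc]; have := n.factorial_pos; positivity)

lemma integrable_exp_neg_sq_sub_mul (c : ℝ) :
    Integrable (fun u => exp (-u ^ 2 - 2 * c * u)) := by
  have := ((integrable_exp_neg_mul_sq one_pos).comp_add_right c).const_mul (exp (c ^ 2))
  refine this.congr (ae_of_all _ fun u => ?_)
  simp only [← exp_add]
  ring_nf

noncomputable def scaledGaussTail (c : ℝ) : ℝ := ∫ u in Ioi 0, exp (-u ^ 2 - 2 * c * u)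

lemma erfc_eq_mul_scaledGaussTail (c : ℝ) :
    erfc c = 2 / √π * exp (-c ^ 2) * scaledGaussTail c := by
  rw [erfc, scaledGaussTail, ← zero_add c, ← integral_Ioi_comp_add_right, zero_add, mul_assoc,
    ← integral_const_mul (exp (-c ^ 2))]
  congr 1
  refine setIntegral_congr_fun measurableSet_Ioi fun u _ => ?_
  rw [← exp_add]
  ring_nf

lemma scaledGaussTail_sub (a b : ℝ) :
    scaledGaussTail a - scaledGaussTail b =
      ∫ u in Ioi 0, (exp (-u ^ 2 - 2 * a * u) - exp (-u ^ 2 - 2 * b * u)) :=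
  (integral_sub (integrable_exp_neg_sq_sub_mul a).integrableOn
    (integrable_exp_neg_sq_sub_mul b).integrableOn).symm

lemma erfc_neg (z : ℝ) : erfc (-z) = 2 - erfc z := by
  have hint : Integrable (fun t : ℝ => exp (-t ^ 2)) := by
    simpa using integrable_exp_neg_mul_sq one_pos
  have hI : ∫ t in Ioi (-z), exp (-t ^ 2) = √π - ∫ t in Ioi z, exp (-t ^ 2) := by
    rw [← integral_comp_neg_Iic, eq_sub_iff_add_eq]
    simp only [even_two, Even.neg_pow]
    rw [intervalIntegral.integral_Iic_add_Ioi hint.integrableOn hint.integrableOn]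
    simpa using integral_gaussian 1
  rw [erfc, erfc, hI]
  field_simp

lemma exp_neg_sq_sub_mul_sub_le {a b u : ℝ} (hab : a ≤ b) (hu : 0 ≤ u) :
    exp (-u ^ 2 - 2 * a * u) - exp (-u ^ 2 - 2 * b * u) ≤
      2 * (b - a) * (u * exp (-(2 * a * u))) := by
  have hsplit : exp (-u ^ 2 - 2 * b * u) =
      exp (-u ^ 2 - 2 * a * u) * exp (-(2 * (b - a) * u)) := by
    rw [← exp_add]; ring_nf
  have h1 : 1 - exp (-(2 * (b - a) * u)) ≤ 2 * (b - a) * u := by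
    linarith [add_one_le_exp (-(2 * (b - a) * u))]
  have h2 : exp (-(2 * (b - a) * u)) ≤ 1 := exp_le_one_iff.2 (by nlinarith)
  have h3 : exp (-u ^ 2 - 2 * a * u) ≤ exp (-(2 * a * u)) := exp_le_exp.2 (by nlinarith)
  rw [hsplit]
  nlinarith [exp_pos (-u ^ 2 - 2 * a * u)]

lemma le_exp_neg_sq_sub_mul_sub {a b u : ℝ} (hab : a ≤ b) (hu : 0 ≤ u) :
    2 * (b - a) * (u * exp (-(2 * b * u)) - u ^ 3 * exp (-(2 * b * u))) ≤
      exp (-u ^ 2 - 2 * a * u) - exp (-u ^ 2 - 2 * b * u) := by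
  have hexp_a : exp (-u ^ 2 - 2 * a * u) =
      exp (-(2 * b * u)) * (exp (-u ^ 2) * exp (2 * (b - a) * u)) := by
    rw [← exp_add, ← exp_add]; ring_nf
  have hexp_b : exp (-u ^ 2 - 2 * b * u) = exp (-(2 * b * u)) * exp (-u ^ 2) := by
    rw [← exp_add]; ring_nf
  have h1 : 1 - u ^ 2 ≤ exp (-u ^ 2) := by linarith [add_one_le_exp (-u ^ 2)]
  have h2 : 2 * (b - a) * u ≤ exp (2 * (b - a) * u) - 1 := by
    linarith [add_one_le_exp (2 * (b - a) * u)]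
  have h3 : 0 ≤ 2 * (b - a) * u := by nlinarith
  have key : (1 - u ^ 2) * (2 * (b - a) * u) ≤
      exp (-u ^ 2) * (exp (2 * (b - a) * u) - 1) := by
    nlinarith [exp_pos (-u ^ 2)]
  rw [hexp_a, hexp_b]
  calc 2 * (b - a) * (u * exp (-(2 * b * u)) - u ^ 3 * exp (-(2 * b * u)))
      = exp (-(2 * b * u)) * ((1 - u ^ 2) * (2 * (b - a) * u)) := by ring
    _ ≤ exp (-(2 * b * u)) * (exp (-u ^ 2) * (exp (2 * (b - a) * u) - 1)) :=
      mul_le_mul_of_nonneg_left key (exp_pos _).le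
    _ = _ := by ring

lemma scaledGaussTail_sub_div_le {a b : ℝ} (ha : 0 < a) (hab : a < b) :
    (scaledGaussTail a - scaledGaussTail b) / (b - a) ≤ 1 / (2 * a ^ 2) := by
  have hmono : scaledGaussTail a - scaledGaussTail b ≤
      ∫ u in Ioi 0, 2 * (b - a) * (u ^ 1 * exp (-(2 * a * u))) := by
    rw [scaledGaussTail_sub]
    refine setIntegral_mono_on
      ((integrable_exp_neg_sq_sub_mul a).sub (integrable_exp_neg_sq_sub_mul b)).integrableOn
      ((integrableOn_pow_mul_exp_neg_mul_Ioi 1 (by positivity)).const_mul _) measurableSet_Ioi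
      fun u hu => ?_
    rw [pow_one]
    exact exp_neg_sq_sub_mul_sub_le hab.le (le_of_lt hu)
  rw [integral_const_mul, integral_pow_mul_exp_neg_mul_Ioi 1 (by positivity)] at hmono
  rw [div_le_iff₀ (by linarith)]
  refine hmono.trans_eq ?_
  rw [Nat.factorial_one]
  field_simp
  ring

lemma le_scaledGaussTail_sub_div {a b : ℝ} (hb : 0 < b) (hab : a < b) :
    1 / (2 * b ^ 2) - 3 / (4 * b ^ 4) ≤ (scaledGaussTail a - scaledGaussTail b) / (b - a) := by
  have h2b : 0 < 2 * b := by linarith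
  have hmono : ∫ u in Ioi 0,
      2 * (b - a) * (u ^ 1 * exp (-(2 * b * u)) - u ^ 3 * exp (-(2 * b * u))) ≤
      scaledGaussTail a - scaledGaussTail b := by
    rw [scaledGaussTail_sub]
    refine setIntegral_mono_on (((integrableOn_pow_mul_exp_neg_mul_Ioi 1 h2b).sub
      (integrableOn_pow_mul_exp_neg_mul_Ioi 3 h2b)).const_mul _)
      ((integrable_exp_neg_sq_sub_mul a).sub (integrable_exp_neg_sq_sub_mul b)).integrableOn
      measurableSet_Ioi fun u hu => ?_
    rw [pow_one]
    exact le_exp_neg_sq_sub_mul_sub hab.le (le_of_lt hu)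
  rw [integral_const_mul, integral_sub (integrableOn_pow_mul_exp_neg_mul_Ioi 1 h2b)
    (integrableOn_pow_mul_exp_neg_mul_Ioi 3 h2b), integral_pow_mul_exp_neg_mul_Ioi 1 h2b,
    integral_pow_mul_exp_neg_mul_Ioi 3 h2b] at hmono
  rw [le_div_iff₀ (by linarith)]
  refine le_of_eq_of_le ?_ hmono
  have : b ≠ 0 := hb.ne'
  simp only [Nat.factorial]
  field_simp
  ring

noncomputable def erfcArg (σ x : ℝ) : ℝ := (σ + x) / √(2 * σ)

lemma sq_erfcArg {σ : ℝ} (hσ : 0 < σ) (x : ℝ) : erfcArg σ x ^ 2 = (σ + x) ^ 2 / (2 * σ) := by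
  rw [erfcArg, div_pow, sq_sqrt (by positivity)]

lemma one_sub_fpH {σ : ℝ} (hσ : 0 < σ) (x : ℝ) :
    1 - fpH σ x = exp (-erfcArg σ (-x) ^ 2) *
      (scaledGaussTail (erfcArg σ (-x)) - scaledGaussTail (erfcArg σ x)) / √π := by
  have hexp : exp (2 * x) * exp (-erfcArg σ x ^ 2) = exp (-erfcArg σ (-x) ^ 2) := by
    rw [← exp_add, sq_erfcArg hσ, sq_erfcArg hσ]
    congr 1
    field_simp
    ring
  have hneg : (x - σ) / √(2 * σ) = -erfcArg σ (-x) := by rw [erfcArg]; ring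
  have hpos : (x + σ) / √(2 * σ) = erfcArg σ x := by rw [erfcArg, add_comm]
  rw [fpH, hneg, hpos, erfc_neg, erfc_eq_mul_scaledGaussTail, erfc_eq_mul_scaledGaussTail,
    ← hexp]
  field_simp
  ring

lemma fph_eq {σ : ℝ} (hσ : 0 < σ) (x : ℝ) :
    fph σ x = x * exp (-erfcArg σ (-x) ^ 2) / (√π * (√(2 * σ) * σ)) := by
  rw [fph, sq_erfcArg hσ, show 2 * π * σ ^ 3 = π * ((2 * σ) * σ ^ 2) by ring,
    sqrt_mul pi_pos.le, sqrt_mul (by positivity), sqrt_sq hσ.le]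
  congr 3
  ring

lemma fph_div_one_sub_fpH {σ x : ℝ} (hσ : 0 < σ) (hx : x ≠ 0) :
    fph σ x / (1 - fpH σ x) = (2 * σ * ((scaledGaussTail (erfcArg σ (-x)) -
      scaledGaussTail (erfcArg σ x)) / (erfcArg σ x - erfcArg σ (-x))))⁻¹ := by
  have hdiff : erfcArg σ x - erfcArg σ (-x) = 2 * x / √(2 * σ) := by
    simp only [erfcArg]; ring
  have : √(2 * σ) ≠ 0 := by positivity
  rw [fph_eq hσ, one_sub_fpH hσ, hdiff]
  field_simp

lemma tendsto_self_div_sq_erfcArg (c : ℝ) :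
    Tendsto (fun σ => σ / erfcArg σ c ^ 2) atTop (𝓝 2) := by
  have hlim : Tendsto (fun σ : ℝ => 2 / (1 + c * σ⁻¹) ^ 2) atTop (𝓝 (2 / (1 + c * 0) ^ 2)) :=
    tendsto_const_nhds.div (((tendsto_inv_atTop_zero.const_mul c).const_add 1).pow 2) (by simp)
  rw [mul_zero, add_zero, one_pow, div_one] at hlim
  refine hlim.congr' ?_
  filter_upwards [eventually_gt_atTop 0, eventually_gt_atTop (-c)] with σ hσ hσc
  have : σ + c ≠ 0 := by linarith
  rw [sq_erfcArg hσ]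
  field_simp

lemma erfcArg_neg_pos_and_lt {σ x : ℝ} (hx : 0 < x) (hxσ : x < σ) :
    0 < erfcArg σ (-x) ∧ erfcArg σ (-x) < erfcArg σ x := by
  have hs : 0 < √(2 * σ) := by apply sqrt_pos.2; linarith
  exact ⟨div_pos (by linarith) hs, div_lt_div_of_pos_right (by linarith) hs⟩

theorem hazard_rate_limit (Λ : ℝ) (hΛ : 0 < Λ) :
    Filter.Tendsto (fun σ => fph σ Λ / (1 - fpH σ Λ)) Filter.atTop (nhds (1/2)) := by
  set a := fun σ => erfcArg σ (-Λ)
  set b := fun σ => erfcArg σ Λ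
  set q := fun σ => 2 * σ * ((scaledGaussTail (a σ) - scaledGaussTail (b σ)) / (b σ - a σ))
  have hb := tendsto_self_div_sq_erfcArg Λ
  -- this is `2σ (1/(2b²) - 3/(4b⁴))`, written so that its limit follows from `σ / b² → 2`
  have hlower : Tendsto (fun σ => σ / b σ ^ 2 - 3 / 2 * (σ / b σ ^ 2 * (σ / b σ ^ 2) / σ))
      atTop (𝓝 2) := by
    simpa using hb.sub (((hb.mul hb).div_atTop tendsto_id).const_mul (3 / 2))
  have hpos : ∀ᶠ σ in atTop, 0 < σ ∧ 0 < a σ ∧ a σ < b σ := by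
    filter_upwards [eventually_gt_atTop Λ] with σ hσ
    exact ⟨hΛ.trans hσ, erfcArg_neg_pos_and_lt hΛ hσ⟩
  have hq : Tendsto q atTop (𝓝 2) := by
    refine tendsto_of_tendsto_of_tendsto_of_le_of_le' hlower (tendsto_self_div_sq_erfcArg (-Λ))
      ?_ ?_ <;> filter_upwards [hpos] with σ ⟨hσ, ha, hab⟩
    · have hb0 : b σ ≠ 0 := by linarith
      calc _ = 2 * σ * (1 / (2 * b σ ^ 2) - 3 / (4 * b σ ^ 4)) := by field_simp; ring
        _ ≤ q σ := mul_le_mul_of_nonneg_left (le_scaledGaussTail_sub_div (ha.trans hab) hab)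
          (by positivity)
    · calc q σ ≤ 2 * σ * (1 / (2 * a σ ^ 2)) :=
            mul_le_mul_of_nonneg_left (scaledGaussTail_sub_div_le ha hab) (by positivity)
        _ = σ / a σ ^ 2 := by field_simp
  rw [one_div]
  refine (hq.inv₀ two_ne_zero).congr' ?_
  filter_upwards [eventually_gt_atTop 0] with σ hσ
  exact (fph_div_one_sub_fpH hσ hΛ.ne').symm
end

section
/- For every Λ > 0 and every fixed σ ≥ 0, lim_{τ→∞} h(τ + σ, Λ)/(1 - H(τ, Λ)) = e^{-σ/2}/2. -/
open Real MeasureTheory Set Filter Topology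

/-! With `z± = (τ ± Λ) / √(2τ)` and `M z = ∫₀^∞ exp (-u² - 2zu) du = exp (z²) ∫_z^∞ exp (-t²) dt`,
the reflection `erfc (-z) = 2 - erfc z` and `z₊² - z₋² = 2Λ` give
`1 - H(τ, Λ) = exp (-z₋²) (M z₋ - M z₊) / √π`. Squeezing `exp (-u²)` between `1 - u²` and `1` in
`M z₋ - M z₊ = ∫₀^∞ exp (-u²) (exp (-2z₋u) - exp (-2z₊u)) du` gives `τ^{3/2} (M z₋ - M z₊) → √2 Λ`.
The Gaussian exponents of `h(τ + σ, Λ)` and of `exp (-z₋²)` differ by `-σ/2 + O(1/τ)`, and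
`√(2π(τ + σ)³) ~ √(2π) τ^{3/2}`, so the ratio tends to `exp (-σ/2) / 2`. -/

lemma integrableOn_pow_mul_exp_neg_mul (n : ℕ) {c : ℝ} (hc : 0 < c) :
    IntegrableOn (fun u : ℝ => u ^ n * exp (-(c * u))) (Ioi 0) := by
  refine (integrableOn_rpow_mul_exp_neg_mul_rpow (s := n) (by linarith [n.cast_nonneg (α := ℝ)])
    one_pos hc).congr_fun (fun u _ => ?_) measurableSet_Ioi
  simp only [rpow_one, rpow_natCast, neg_mul]

lemma integral_pow_mul_exp_neg_mul (n : ℕ) {c : ℝ} (hc : 0 < c) :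
    ∫ u in Ioi (0 : ℝ), u ^ n * exp (-(c * u)) = n.factorial / c ^ (n + 1) := by
  have h := integral_rpow_mul_exp_neg_mul_Ioi (a := n + 1) (by positivity) hc
  simp only [add_sub_cancel_right, rpow_natCast] at h
  rw [h, Gamma_nat_eq_factorial, ← Nat.cast_succ, rpow_natCast, one_div, inv_pow, inv_mul_eq_div]

/-- The `M z = √π / 2 · erfcx z` above. -/
noncomputable def gaussTailScaled (z : ℝ) : ℝ :=
  ∫ u in Ioi 0, exp (-u ^ 2) * exp (-(2 * z * u))

lemma erfc_eq_exp_mul_gaussTailScaled (z : ℝ) :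
    erfc z = 2 / √π * (exp (-z ^ 2) * gaussTailScaled z) := by
  have h := (measurePreserving_add_right (volume : Measure ℝ) z).setIntegral_preimage_emb
    (Homeomorph.addRight z).isClosedEmbedding.measurableEmbedding (fun t => exp (-t ^ 2)) (Ioi z)
  rw [erfc, gaussTailScaled, ← h, preimage_add_const_Ioi, sub_self,
    ← integral_const_mul (exp (-z ^ 2))]
  congr 1
  refine setIntegral_congr_fun measurableSet_Ioi (fun u _ => ?_)
  simp only [← exp_add]
  ring_nf

lemma integrableOn_exp_neg_sq_mul_exp_neg_mul {c : ℝ} (hc : 0 < c) :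
    IntegrableOn (fun u : ℝ => exp (-u ^ 2) * exp (-(c * u))) (Ioi 0) := by
  refine (integrableOn_pow_mul_exp_neg_mul 0 hc).mono' (by fun_prop)
    (Eventually.of_forall fun u => ?_)
  rw [pow_zero, one_mul, norm_of_nonneg (by positivity)]
  exact mul_le_of_le_one_left (exp_pos _).le (exp_le_one_iff.2 (by nlinarith))

lemma gaussTailScaled_sub_mem_Icc {a b : ℝ} (ha : 0 < a) (hab : a ≤ b) :
    gaussTailScaled a - gaussTailScaled b ∈
      Icc (1 / (2 * a) - 1 / (2 * b) - (1 / (4 * a ^ 3) - 1 / (4 * b ^ 3)))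
        (1 / (2 * a) - 1 / (2 * b)) := by
  have hb : 0 < b := ha.trans_le hab
  set w : ℝ → ℝ := fun u => exp (-(2 * a * u)) - exp (-(2 * b * u)) with hw_def
  have hw : ∀ u ∈ Ioi (0 : ℝ), 0 ≤ w u := fun u hu =>
    sub_nonneg.2 (exp_le_exp.2 (by nlinarith [mem_Ioi.1 hu]))
  have hmoment (n : ℕ) : IntegrableOn (fun u => u ^ n * w u) (Ioi 0) ∧ ∫ u in Ioi 0, u ^ n * w u =
      n.factorial / (2 * a) ^ (n + 1) - n.factorial / (2 * b) ^ (n + 1) := by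
    have ha' := integrableOn_pow_mul_exp_neg_mul n (by positivity : 0 < 2 * a)
    have hb' := integrableOn_pow_mul_exp_neg_mul n (by positivity : 0 < 2 * b)
    simp only [hw_def, mul_sub]
    refine ⟨ha'.sub hb', ?_⟩
    rw [integral_sub ha' hb', integral_pow_mul_exp_neg_mul n (by positivity),
      integral_pow_mul_exp_neg_mul n (by positivity)]
  have ha' := integrableOn_exp_neg_sq_mul_exp_neg_mul (by positivity : 0 < 2 * a)
  have hb' := integrableOn_exp_neg_sq_mul_exp_neg_mul (by positivity : 0 < 2 * b)
  have hint : IntegrableOn (fun u => exp (-u ^ 2) * w u) (Ioi 0) := by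
    simp only [hw_def, mul_sub]
    exact ha'.sub hb'
  have hdiff : gaussTailScaled a - gaussTailScaled b = ∫ u in Ioi 0, exp (-u ^ 2) * w u := by
    simp only [gaussTailScaled, hw_def, mul_sub]
    exact (integral_sub ha' hb').symm
  obtain ⟨h0, hI0⟩ := hmoment 0
  obtain ⟨h2, hI2⟩ := hmoment 2
  rw [hdiff]
  constructor
  · have hlow : ∫ u in Ioi 0, (u ^ 0 * w u - u ^ 2 * w u) =
        1 / (2 * a) - 1 / (2 * b) - (1 / (4 * a ^ 3) - 1 / (4 * b ^ 3)) := by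
      rw [integral_sub h0 h2, hI0, hI2]
      norm_num [Nat.factorial]
      field_simp
      ring
    rw [← hlow]
    refine setIntegral_mono_on (h0.sub h2) hint measurableSet_Ioi fun u hu => ?_
    have := add_one_le_exp (-u ^ 2)
    nlinarith [hw u hu]
  · have hup : ∫ u in Ioi 0, u ^ 0 * w u = 1 / (2 * a) - 1 / (2 * b) := by
      rw [hI0]
      norm_num
    rw [← hup]
    refine setIntegral_mono_on hint h0 measurableSet_Ioi fun u hu => ?_
    have : exp (-u ^ 2) ≤ 1 := exp_le_one_iff.2 (by nlinarith)
    nlinarith [hw u hu]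

lemma one_sub_fpH_eq (Λ : ℝ) {τ : ℝ} (hτ : 0 < τ) :
    1 - fpH τ Λ = exp (-((τ - Λ) / √(2 * τ)) ^ 2) *
      (gaussTailScaled ((τ - Λ) / √(2 * τ)) - gaussTailScaled ((τ + Λ) / √(2 * τ))) / √π := by
  set z₁ := (τ - Λ) / √(2 * τ)
  set z₂ := (τ + Λ) / √(2 * τ)
  have hz : z₂ ^ 2 = z₁ ^ 2 + 2 * Λ := by
    simp only [z₁, z₂, div_pow, sq_sqrt (by positivity : 0 ≤ 2 * τ)]
    field_simp
    ring
  have hexp : exp (2 * Λ) * exp (-z₂ ^ 2) = exp (-z₁ ^ 2) := by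
    rw [← exp_add, hz]
    ring_nf
  have hneg : (Λ - τ) / √(2 * τ) = -z₁ := by ring
  rw [fpH, hneg, add_comm Λ τ, erfc_neg, erfc_eq_exp_mul_gaussTailScaled,
    erfc_eq_exp_mul_gaussTailScaled]
  linear_combination (-gaussTailScaled z₂ / √π) * hexp

lemma tendsto_div_add_const_atTop (c : ℝ) : Tendsto (fun τ : ℝ => τ / (τ + c)) atTop (𝓝 1) := by
  have h : Tendsto (fun τ : ℝ => (1 + c * τ⁻¹)⁻¹) atTop (𝓝 1) := by
    simpa using ((tendsto_inv_atTop_zero.const_mul c).const_add 1).inv₀ (by simp)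
  refine h.congr' ?_
  filter_upwards [eventually_gt_atTop 0] with τ hτ
  field_simp

lemma tendsto_gaussTailScaled_sub {Λ : ℝ} (hΛ : 0 < Λ) :
    Tendsto (fun τ => τ * √τ *
      (gaussTailScaled ((τ - Λ) / √(2 * τ)) - gaussTailScaled ((τ + Λ) / √(2 * τ))))
      atTop (𝓝 (√2 * Λ)) := by
  set p : ℝ → ℝ := fun τ => τ / (τ - Λ)
  set q : ℝ → ℝ := fun τ => τ / (τ + Λ)
  have hp : Tendsto p atTop (𝓝 1) := by
    simp only [p, sub_eq_add_neg]
    exact tendsto_div_add_const_atTop (-Λ)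
  have hq : Tendsto q atTop (𝓝 1) := tendsto_div_add_const_atTop Λ
  have hupper : Tendsto (fun τ => √2 * Λ * (p τ * q τ)) atTop (𝓝 (√2 * Λ)) := by
    simpa using (hp.mul hq).const_mul (√2 * Λ)
  have hlower : Tendsto (fun τ => √2 * Λ * (p τ * q τ) - √2 / 2 * (p τ ^ 3 - q τ ^ 3)) atTop
      (𝓝 (√2 * Λ)) := by
    simpa using hupper.sub (((hp.pow 3).sub (hq.pow 3)).const_mul (√2 / 2))
  have hbounds : ∀ᶠ τ in atTop, τ * √τ *
      (gaussTailScaled ((τ - Λ) / √(2 * τ)) - gaussTailScaled ((τ + Λ) / √(2 * τ))) ∈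
      Icc (√2 * Λ * (p τ * q τ) - √2 / 2 * (p τ ^ 3 - q τ ^ 3)) (√2 * Λ * (p τ * q τ)) := by
    filter_upwards [eventually_gt_atTop Λ] with τ hτ
    have hτ0 : 0 < τ := hΛ.trans hτ
    have hss : √τ ^ 2 = τ := sq_sqrt hτ0.le
    have h2τ : √(2 * τ) = √2 * √τ := sqrt_mul zero_le_two τ
    have h22 : √2 ^ 2 = 2 := sq_sqrt zero_le_two
    obtain ⟨hlo, hhi⟩ := gaussTailScaled_sub_mem_Icc (a := (τ - Λ) / √(2 * τ))
      (b := (τ + Λ) / √(2 * τ)) (div_pos (sub_pos.2 hτ) (by positivity))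
      (div_le_div_of_nonneg_right (by linarith) (sqrt_nonneg _))
    have hfirst : τ * √τ * (1 / (2 * ((τ - Λ) / √(2 * τ))) - 1 / (2 * ((τ + Λ) / √(2 * τ)))) =
        √2 * Λ * (p τ * q τ) := by
      simp only [p, q, h2τ]
      field_simp
      rw [hss]
      ring
    have hsecond : τ * √τ * (1 / (4 * ((τ - Λ) / √(2 * τ)) ^ 3) -
        1 / (4 * ((τ + Λ) / √(2 * τ)) ^ 3)) = √2 / 2 * (p τ ^ 3 - q τ ^ 3) := by
      simp only [p, q, h2τ]
      field_simp
      rw [h22, show √τ ^ 4 = (√τ ^ 2) ^ 2 by ring, hss]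
      ring
    have hpos : 0 ≤ τ * √τ := by positivity
    constructor
    · rw [← hfirst, ← hsecond, ← mul_sub]
      exact mul_le_mul_of_nonneg_left hlo hpos
    · rw [← hfirst]
      exact mul_le_mul_of_nonneg_left hhi hpos
  exact tendsto_of_tendsto_of_tendsto_of_le_of_le' hlower hupper
    (hbounds.mono fun _ h => h.1) (hbounds.mono fun _ h => h.2)

lemma tendsto_hazard_exponent (Λ σ : ℝ) :
    Tendsto (fun τ => ((τ - Λ) / √(2 * τ)) ^ 2 + -(Λ - (τ + σ)) ^ 2 / (2 * (τ + σ))) atTop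
      (𝓝 (-σ / 2)) := by
  have h (c : ℝ) : Tendsto (fun τ : ℝ => Λ ^ 2 / (2 * (τ + c))) atTop (𝓝 0) :=
    tendsto_const_nhds.div_atTop
      ((tendsto_atTop_add_const_right _ c tendsto_id).const_mul_atTop two_pos)
  refine Tendsto.congr' ?_ (by simpa using ((h 0).sub (h σ)).const_add (-σ / 2))
  filter_upwards [eventually_gt_atTop 0, eventually_gt_atTop (-σ)] with τ hτ hτσ
  have hτσ' : τ + σ ≠ 0 := by linarith
  rw [div_pow, sq_sqrt (by positivity)]
  field_simp
  ring

lemma fph_div_one_sub_fpH_eq (Λ σ : ℝ) {τ : ℝ} (hτ : 0 < τ) (hτσ : 0 < τ + σ) :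
    fph (τ + σ) Λ / (1 - fpH τ Λ) =
      exp (((τ - Λ) / √(2 * τ)) ^ 2 + -(Λ - (τ + σ)) ^ 2 / (2 * (τ + σ))) * √(τ / (τ + σ)) ^ 3 *
        (Λ / (√2 * (τ * √τ *
          (gaussTailScaled ((τ - Λ) / √(2 * τ)) - gaussTailScaled ((τ + Λ) / √(2 * τ)))))) := by
  have hpow : √((τ + σ) ^ 3) = √(τ + σ) ^ 3 := by
    rw [sqrt_eq_iff_eq_sq (by positivity) (by positivity), ← pow_mul, mul_comm, pow_mul,
      sq_sqrt hτσ.le]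
  rw [fph, one_sub_fpH_eq Λ hτ, exp_add, exp_neg, sqrt_div hτ.le,
    sqrt_mul (by positivity : (0 : ℝ) ≤ 2 * π) ((τ + σ) ^ 3), sqrt_mul zero_le_two π, hpow]
  field_simp
  rw [sq_sqrt hτ.le]

theorem shifted_hazard_limit_general (Λ σ : ℝ) (hΛ : 0 < Λ) :
    Filter.Tendsto (fun τ => fph (τ + σ) Λ / (1 - fpH τ Λ)) Filter.atTop
      (nhds (Real.exp (-σ/2) / 2)) := by
  have hgap := tendsto_gaussTailScaled_sub hΛ
  have hscale : Tendsto (fun τ => √(τ / (τ + σ)) ^ 3) atTop (𝓝 1) := by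
    simpa using ((tendsto_div_add_const_atTop σ).sqrt).pow 3
  have hlim := ((tendsto_hazard_exponent Λ σ).rexp.mul hscale).mul
    ((tendsto_const_nhds (x := Λ)).div (hgap.const_mul √2) (by positivity : √2 * (√2 * Λ) ≠ 0))
  have hval : exp (-σ / 2) * 1 * (Λ / (√2 * (√2 * Λ))) = exp (-σ / 2) / 2 := by
    rw [← mul_assoc, mul_self_sqrt zero_le_two]
    field_simp
  rw [hval] at hlim
  refine hlim.congr' ?_
  filter_upwards [eventually_gt_atTop 0, eventually_gt_atTop (-σ)] with τ hτ hτσ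
  exact (fph_div_one_sub_fpH_eq Λ σ hτ (by linarith)).symm

theorem shifted_hazard_limit (Λ σ : ℝ) (hΛ : 0 < Λ) (hσ : 0 ≤ σ) :
    Filter.Tendsto (fun τ => fph (τ + σ) Λ / (1 - fpH τ Λ)) Filter.atTop
      (nhds (Real.exp (-σ/2) / 2)) :=
  shifted_hazard_limit_general Λ σ hΛ
end

section
/- For all σ > 0 and x, y > 0, the absorbed heat kernel κ(σ,y,x) = exp(-(y-x+σ)²/(2σ))/√(2πσ) · (1 - exp(-2xy/σ)) is nonnegative, and its integral over y ∈ (0,∞) equals 1 - H(σ,x), which is at most 1. -/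
/-! The method of images: completing the square writes `κ(σ, ·, x)` as the Gaussian density
centred at `x - σ` minus `e^{2x}` times the Gaussian density centred at `-x - σ`. The mass of
each on `(0, ∞)` is a Gaussian tail, i.e. a value of `erfc`, and the reflection
`erfc (-z) = 2 - erfc z` turns their difference into `1 - H(σ, x)`. -/

open Real MeasureTheory Set Filter Topology

lemma integrable_exp_neg_sq : Integrable (fun t : ℝ => exp (-t ^ 2)) := by
  simpa using integrable_exp_neg_mul_sq one_pos

lemma integral_exp_neg_sq : ∫ t : ℝ, exp (-t ^ 2) = √π := by
  simpa using integral_gaussian 1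

lemma integral_Ioi_exp_neg_sq (z : ℝ) : ∫ t in Ioi z, exp (-t ^ 2) = √π / 2 * erfc z := by
  have hπ : 0 < √π := sqrt_pos.mpr pi_pos
  unfold erfc
  field_simp

lemma erfc_nonneg (z : ℝ) : 0 ≤ erfc z :=
  mul_nonneg (by positivity) (setIntegral_nonneg measurableSet_Ioi fun t _ => (exp_pos _).le)

section GaussianTail

variable {σ : ℝ}

lemma integrable_exp_neg_add_sq_div (hσ : 0 < σ) (c : ℝ) :
    Integrable (fun y : ℝ => exp (-(y + c) ^ 2 / (2 * σ))) := by
  have h := (integrable_exp_neg_mul_sq (b := 1 / (2 * σ)) (by positivity)).comp_add_right c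
  refine h.congr (Eventually.of_forall fun y => ?_)
  field_simp

lemma integral_Ioi_exp_neg_sq_div (hσ : 0 < σ) (c : ℝ) :
    ∫ u in Ioi c, exp (-u ^ 2 / (2 * σ)) = √(2 * π * σ) * (erfc (c / √(2 * σ)) / 2) := by
  set b := √(2 * σ)
  have hb : 0 < b := sqrt_pos.mpr (by positivity)
  have hb2 : b ^ 2 = 2 * σ := sq_sqrt (by positivity)
  have hscale := integral_comp_mul_right_Ioi' (fun u => exp (-u ^ 2 / (2 * σ))) (c / b) hb
  have hsq : √(2 * π * σ) = b * √π := by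
    rw [← sqrt_mul (by positivity)]
    ring_nf
  have hrescale : ∀ t : ℝ, exp (-(t * b) ^ 2 / (2 * σ)) = exp (-t ^ 2) := fun t => by
    rw [mul_pow, hb2]
    field_simp
  simp only [hrescale, div_mul_cancel₀ _ hb.ne', smul_eq_mul] at hscale
  rw [← hscale, integral_Ioi_exp_neg_sq, hsq]
  ring

lemma integral_Ioi_zero_gaussian_shift (hσ : 0 < σ) (c : ℝ) :
    ∫ y in Ioi 0, exp (-(y + c) ^ 2 / (2 * σ)) / √(2 * π * σ) = erfc (c / √(2 * σ)) / 2 := by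
  have hshift := (measurePreserving_add_right volume c).setIntegral_preimage_emb
    (MeasurableEquiv.addRight c).measurableEmbedding (fun u => exp (-u ^ 2 / (2 * σ))) (Ioi c)
  simp only [preimage_add_const_Ioi, sub_self] at hshift
  have hs : 0 < √(2 * π * σ) := sqrt_pos.mpr (by positivity)
  rw [integral_div, hshift, integral_Ioi_exp_neg_sq_div hσ]
  field_simp

end GaussianTail

lemma kap_eq_sub {σ : ℝ} (hσ : σ ≠ 0) (y x : ℝ) :
    kap σ y x = exp (-(y + (σ - x)) ^ 2 / (2 * σ)) / √(2 * π * σ)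
      - exp (2 * x) * (exp (-(y + (σ + x)) ^ 2 / (2 * σ)) / √(2 * π * σ)) := by
  have hcenter : exp (-(y - x + σ) ^ 2 / (2 * σ)) = exp (-(y + (σ - x)) ^ 2 / (2 * σ)) := by
    ring_nf
  -- `(y + σ + x)² - (y + σ - x)² = 4x(y + σ)`: this is where the image weight `e^{2x}` comes from.
  have himage : exp (-(y - x + σ) ^ 2 / (2 * σ)) * exp (-(2 * x * y) / σ)
      = exp (2 * x) * exp (-(y + (σ + x)) ^ 2 / (2 * σ)) := by
    rw [← exp_add, ← exp_add]
    congr 1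
    field_simp
    ring
  rw [kap, mul_one_sub, div_mul_eq_mul_div, himage, hcenter]
  ring

lemma integral_kap {σ : ℝ} (hσ : 0 < σ) (x : ℝ) :
    ∫ y in Ioi 0, kap σ y x = 1 - fpH σ x := by
  have hint : ∀ c, IntegrableOn (fun y => exp (-(y + c) ^ 2 / (2 * σ)) / √(2 * π * σ)) (Ioi 0) :=
    fun c => ((integrable_exp_neg_add_sq_div hσ c).div_const _).integrableOn
  simp_rw [kap_eq_sub hσ.ne']
  rw [integral_sub (hint _) ((hint _).const_mul _), integral_const_mul,
    integral_Ioi_zero_gaussian_shift hσ, integral_Ioi_zero_gaussian_shift hσ,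
    show (σ - x) / √(2 * σ) = -((x - σ) / √(2 * σ)) by ring, erfc_neg, fpH, add_comm σ x]
  ring

lemma kap_nonneg {σ x y : ℝ} (hσ : 0 ≤ σ) (hxy : 0 ≤ x * y) : 0 ≤ kap σ y x := by
  have hdecay : exp (-(2 * x * y) / σ) ≤ 1 :=
    exp_le_one_iff.mpr (div_nonpos_of_nonpos_of_nonneg (by linarith) hσ)
  unfold kap
  exact mul_nonneg (by positivity) (sub_nonneg.mpr hdecay)

lemma fpH_nonneg (σ x : ℝ) : 0 ≤ fpH σ x := by
  have := erfc_nonneg ((x - σ) / √(2 * σ))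
  have := erfc_nonneg ((x + σ) / √(2 * σ))
  unfold fpH
  positivity

theorem kap_nonneg_and_mass (σ x : ℝ) (hσ : 0 < σ) (hx : 0 < x) :
    (∀ y : ℝ, 0 < y → 0 ≤ kap σ y x) ∧
    (∫ y in Set.Ioi (0:ℝ), kap σ y x) = 1 - fpH σ x ∧
    1 - fpH σ x ≤ 1 :=
  ⟨fun _ hy => kap_nonneg hσ.le (mul_pos hx hy).le, integral_kap hσ x,
    sub_le_self _ (fpH_nonneg σ x)⟩
end

section
/- The absorbed heat kernel satisfies the Chapman–Kolmogorov relation: for all σ, τ > 0 and x, y > 0, ∫_0^∞ κ(σ, y, z)·κ(τ, z, x) dz = κ(σ + τ, y, x). -/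
open Real MeasureTheory Set Filter Topology

/-!
Write `q_t(y, x)` for the Gaussian transition density of Brownian motion with drift `-1` on the
whole line. By the method of images, `κ_t(y, x) = q_t(y, x) - e^{2x} q_t(y, -x)
= q_t(y, x) - e^{-2y} q_t(-y, x)`, and the Gaussian convolution identity
`∫ q_σ(y, z) q_τ(z, x) dz = q_{σ+τ}(y, x)` (completing the square) gives
`∫_ℝ κ_σ(y, z) κ_τ(z, x) dz = κ_{σ+τ}(y, x) - e^{2x} κ_{σ+τ}(y, -x) = 2 κ_{σ+τ}(y, x)`.
The integrand is even in `z`, because `κ_t(y, -z) = -e^{-2z} κ_t(y, z)` and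
`κ_t(-z, x) = -e^{2z} κ_t(z, x)`, so the integral over `(0, ∞)` is half of that over `ℝ`.
-/

noncomputable def driftHeatKernel (t y x : ℝ) : ℝ :=
  exp (-(y - x + t) ^ 2 / (2 * t)) / √(2 * π * t)

lemma exp_neg_sq_div_mul_exp_neg_sq_div {p q : ℝ} (hp : p ≠ 0) (hq : q ≠ 0) (hpq : p + q ≠ 0)
    (a b z : ℝ) :
    exp (-(z - a) ^ 2 / (2 * p)) * exp (-(z - b) ^ 2 / (2 * q)) =
      exp (-(a - b) ^ 2 / (2 * (p + q))) *
        exp (-((p + q) / (2 * p * q)) * (z - (q * a + p * b) / (p + q)) ^ 2) := by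
  rw [← exp_add, ← exp_add]
  congr 1
  field_simp
  ring

lemma driftHeatKernel_mul_driftHeatKernel {σ τ : ℝ} (hσ : 0 < σ) (hτ : 0 < τ) (y z x : ℝ) :
    driftHeatKernel σ y z * driftHeatKernel τ z x =
      exp (-(y - x + (σ + τ)) ^ 2 / (2 * (σ + τ))) / (√(2 * π * σ) * √(2 * π * τ)) *
        exp (-((σ + τ) / (2 * σ * τ)) * (z - (τ * (y + σ) + σ * (x - τ)) / (σ + τ)) ^ 2) := by
  have key := exp_neg_sq_div_mul_exp_neg_sq_div hσ.ne' hτ.ne' (by positivity) (y + σ) (x - τ) z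
  simp only [driftHeatKernel]
  rw [show y - z + σ = -(z - (y + σ)) by ring, show z - x + τ = z - (x - τ) by ring,
    show y - x + (σ + τ) = y + σ - (x - τ) by ring, neg_sq]
  rw [div_mul_div_comm, key]
  ring

lemma integrable_driftHeatKernel_mul {σ τ : ℝ} (hσ : 0 < σ) (hτ : 0 < τ) (y x : ℝ) :
    Integrable (fun z ↦ driftHeatKernel σ y z * driftHeatKernel τ z x) := by
  simp_rw [driftHeatKernel_mul_driftHeatKernel hσ hτ]
  exact ((integrable_exp_neg_mul_sq (by positivity)).comp_sub_right _).const_mul _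

lemma integral_driftHeatKernel_mul {σ τ : ℝ} (hσ : 0 < σ) (hτ : 0 < τ) (y x : ℝ) :
    ∫ z, driftHeatKernel σ y z * driftHeatKernel τ z x = driftHeatKernel (σ + τ) y x := by
  simp_rw [driftHeatKernel_mul_driftHeatKernel hσ hτ]
  rw [integral_const_mul, integral_sub_right_eq_self (fun z ↦ exp (-_ * z ^ 2)),
    integral_gaussian]
  have hsqrt : √(2 * π * σ) * √(2 * π * τ) =
      √(π / ((σ + τ) / (2 * σ * τ))) * √(2 * π * (σ + τ)) := by
    rw [← sqrt_mul (by positivity), ← sqrt_mul (by positivity)]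
    congr 1
    field_simp
  rw [driftHeatKernel, hsqrt]
  field_simp

lemma exp_mul_driftHeatKernel_reflect {t : ℝ} (ht : t ≠ 0) (y x : ℝ) :
    exp (2 * x) * driftHeatKernel t y (-x) = exp (-(2 * y)) * driftHeatKernel t (-y) x := by
  simp only [driftHeatKernel, ← mul_div_assoc, ← exp_add]
  congr 2
  field_simp
  ring

lemma kap_eq_sub_reflect_right {t : ℝ} (ht : t ≠ 0) (y x : ℝ) :
    kap t y x = driftHeatKernel t y x - exp (2 * x) * driftHeatKernel t y (-x) := by
  simp only [kap, driftHeatKernel, mul_sub, mul_one, ← mul_div_assoc, div_mul_eq_mul_div,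
    ← exp_add]
  congr 3
  field_simp
  ring

lemma kap_eq_sub_reflect_left {t : ℝ} (ht : t ≠ 0) (y x : ℝ) :
    kap t y x = driftHeatKernel t y x - exp (-(2 * y)) * driftHeatKernel t (-y) x := by
  rw [kap_eq_sub_reflect_right ht, exp_mul_driftHeatKernel_reflect ht]

lemma kap_neg_right {t : ℝ} (ht : t ≠ 0) (y x : ℝ) :
    kap t y (-x) = -exp (-(2 * x)) * kap t y x := by
  have h : exp (-(2 * x)) * exp (2 * x) = 1 := by rw [← exp_add]; simp
  rw [kap_eq_sub_reflect_right ht, kap_eq_sub_reflect_right ht, neg_neg, mul_neg]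
  linear_combination -driftHeatKernel t y (-x) * h

lemma kap_neg_left {t : ℝ} (ht : t ≠ 0) (y x : ℝ) :
    kap t (-y) x = -exp (2 * y) * kap t y x := by
  have h : exp (2 * y) * exp (-(2 * y)) = 1 := by rw [← exp_add]; simp
  rw [kap_eq_sub_reflect_left ht, kap_eq_sub_reflect_left ht, neg_neg, mul_neg, neg_neg]
  linear_combination -driftHeatKernel t (-y) x * h

lemma integral_eq_two_mul_setIntegral_Ioi_of_even {f : ℝ → ℝ} (hf : ∀ x, f (-x) = f x) :
    ∫ x, f x = 2 * ∫ x in Ioi 0, f x := by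
  have habs : ∀ x, f |x| = f x := fun x ↦ by rcases abs_choice x with h | h <;> simp [h, hf]
  simpa only [habs] using integral_comp_abs (f := f)

lemma integrable_kap_mul_driftHeatKernel {σ τ : ℝ} (hσ : 0 < σ) (hτ : 0 < τ) (y x : ℝ) :
    Integrable (fun z ↦ kap σ y z * driftHeatKernel τ z x) := by
  simp_rw [kap_eq_sub_reflect_left hσ.ne', sub_mul, mul_assoc]
  exact (integrable_driftHeatKernel_mul hσ hτ y x).sub
    ((integrable_driftHeatKernel_mul hσ hτ (-y) x).const_mul _)

lemma integral_kap_mul_driftHeatKernel {σ τ : ℝ} (hσ : 0 < σ) (hτ : 0 < τ) (y x : ℝ) :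
    ∫ z, kap σ y z * driftHeatKernel τ z x = kap (σ + τ) y x := by
  simp_rw [kap_eq_sub_reflect_left hσ.ne', sub_mul, mul_assoc]
  rw [integral_sub (integrable_driftHeatKernel_mul hσ hτ y x)
      ((integrable_driftHeatKernel_mul hσ hτ (-y) x).const_mul _),
    integral_const_mul, integral_driftHeatKernel_mul hσ hτ, integral_driftHeatKernel_mul hσ hτ,
    kap_eq_sub_reflect_left (by positivity)]

lemma integral_kap_mul_kap {σ τ : ℝ} (hσ : 0 < σ) (hτ : 0 < τ) (y x : ℝ) :
    ∫ z, kap σ y z * kap τ z x = 2 * kap (σ + τ) y x := by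
  simp_rw [kap_eq_sub_reflect_right hτ.ne' _ x, mul_sub, mul_left_comm (kap σ y _)]
  rw [integral_sub (integrable_kap_mul_driftHeatKernel hσ hτ y x)
      ((integrable_kap_mul_driftHeatKernel hσ hτ y (-x)).const_mul _),
    integral_const_mul, integral_kap_mul_driftHeatKernel hσ hτ,
    integral_kap_mul_driftHeatKernel hσ hτ, kap_neg_right (by positivity)]
  have h : exp (2 * x) * exp (-(2 * x)) = 1 := by rw [← exp_add]; simp
  linear_combination kap (σ + τ) y x * h

lemma kap_mul_kap_neg {σ τ : ℝ} (hσ : σ ≠ 0) (hτ : τ ≠ 0) (y z x : ℝ) :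
    kap σ y (-z) * kap τ (-z) x = kap σ y z * kap τ z x := by
  rw [kap_neg_right hσ, kap_neg_left hτ]
  have h : exp (-(2 * z)) * exp (2 * z) = 1 := by rw [← exp_add]; simp
  linear_combination kap σ y z * kap τ z x * h

theorem kap_chapman_kolmogorov_general (σ τ x y : ℝ) (hσ : 0 < σ) (hτ : 0 < τ) :
    (∫ z in Set.Ioi (0:ℝ), kap σ y z * kap τ z x) = kap (σ + τ) y x := by
  have h := integral_eq_two_mul_setIntegral_Ioi_of_even
    (f := fun z ↦ kap σ y z * kap τ z x) (kap_mul_kap_neg hσ.ne' hτ.ne' y · x)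
  rw [integral_kap_mul_kap hσ hτ] at h
  linarith

theorem kap_chapman_kolmogorov (σ τ x y : ℝ) (hσ : 0 < σ) (hτ : 0 < τ)
    (hx : 0 < x) (hy : 0 < y) :
    (∫ z in Set.Ioi (0:ℝ), kap σ y z * kap τ z x) = kap (σ + τ) y x :=
  kap_chapman_kolmogorov_general σ τ x y hσ hτ
end

section
/- For all σ > 0 and x, y > 0, the partial derivative of the absorbed heat kernel with respect to time satisfies the pointwise bound |∂_σ κ(σ,y,x)| ≤ exp(-(y-x)²/(2σ) - (y-x) - σ/2)/(2√(2πσ⁵)) · (σ(1+σ) + (y-x)² + 2σ/e). -/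
open Real MeasureTheory Set Filter Topology

/-!
Write `κ(σ) = G(σ) (1 - Q(σ))` with `G(σ) = exp(-(d+σ)²/(2σ))/√(2πσ)`, `d = y - x`, and
`Q(σ) = exp(-2xy/σ)`. Then `∂_σ κ = G · (A (1 - Q) - Q · 2xy/σ²)` with
`A = d²/(2σ²) - 1/2 - 1/(2σ)`. Since `0 < Q ≤ 1`, the first term is bounded by `|A|`, and the
second equals `u e^{-u}/σ` with `u = 2xy/σ`, hence is at most `1/(eσ)`. Expanding the square in
the exponent of `G` gives the stated form.
-/

namespace Kap

noncomputable def gaussFactor (d σ : ℝ) : ℝ :=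
  exp (-(d + σ)^2 / (2*σ)) / √(2*π*σ)

theorem gaussFactor_pos (d : ℝ) {σ : ℝ} (hσ : 0 < σ) : 0 < gaussFactor d σ := by
  unfold gaussFactor
  positivity

theorem gaussFactor_eq (d : ℝ) {σ : ℝ} (hσ : 0 < σ) :
    gaussFactor d σ = σ^2 * (exp (-d^2 / (2*σ) - d - σ/2) / √(2*π*σ^5)) := by
  have hsqrt : √(2*π*σ^5) = σ^2 * √(2*π*σ) := by
    rw [show 2*π*σ^5 = (σ^2)^2 * (2*π*σ) by ring, sqrt_mul (by positivity),
      sqrt_sq (by positivity)]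
  have hexponent : -(d + σ)^2 / (2*σ) = -d^2 / (2*σ) - d - σ/2 := by
    field_simp
    ring
  rw [gaussFactor, hsqrt, hexponent]
  field_simp

theorem hasDerivAt_gaussFactor (d : ℝ) {σ : ℝ} (hσ : 0 < σ) :
    HasDerivAt (gaussFactor d) (gaussFactor d σ * (d^2 / (2*σ^2) - 1/2 - 1/(2*σ))) σ := by
  have hexponent : HasDerivAt (fun s => -(d + s)^2 / (2*s)) (d^2 / (2*σ^2) - 1/2) σ := by
    have := ((((hasDerivAt_id' σ).const_add d).fun_pow 2).fun_neg).fun_div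
      ((hasDerivAt_id' σ).const_mul 2) (by positivity)
    refine this.congr_deriv ?_
    field_simp
    ring
  have hsqrt : HasDerivAt (fun s => √(2*π*s)) (π / √(2*π*σ)) σ := by
    have := ((hasDerivAt_id' σ).const_mul (2*π)).sqrt (by positivity)
    refine this.congr_deriv ?_
    field_simp
  have hS : 0 < √(2*π*σ) := sqrt_pos.2 (by positivity)
  refine (hexponent.exp.fun_div hsqrt hS.ne').congr_deriv ?_
  rw [gaussFactor]
  field_simp
  rw [sq_sqrt (by positivity : (0:ℝ) ≤ σ*2*π)]
  ring

theorem hasDerivAt_one_sub_exp_neg_div (a : ℝ) {σ : ℝ} (hσ : σ ≠ 0) :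
    HasDerivAt (fun s => 1 - exp (-a / s)) (-(exp (-a / σ) * (a / σ^2))) σ := by
  have hinner : HasDerivAt (fun s => -a / s) (a / σ^2) σ := by
    refine ((hasDerivAt_inv hσ).const_mul (-a)).congr_deriv ?_
    field_simp
  exact hinner.exp.const_sub 1

theorem abs_kapDerivFactor_le (d : ℝ) {a σ : ℝ} (ha : 0 ≤ a) (hσ : 0 < σ) :
    |(d^2 / (2*σ^2) - 1/2 - 1/(2*σ)) * (1 - exp (-a / σ)) - exp (-a / σ) * (a / σ^2)| ≤
      (σ*(1+σ) + d^2 + 2*σ/exp 1) / (2*σ^2) := by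
  rw [neg_div]
  set Q := exp (-(a / σ))
  have hQ1 : Q ≤ 1 := exp_le_one_iff.2 (neg_nonpos.2 (by positivity))
  have hA : |d^2 / (2*σ^2) - 1/2 - 1/(2*σ)| ≤ d^2 / (2*σ^2) + 1/2 + 1/(2*σ) := by
    have : 0 ≤ d^2 / (2*σ^2) := by positivity
    have : 0 ≤ 1/(2*σ) := by positivity
    rw [abs_le]
    constructor <;> linarith
  have hfirst : |(d^2 / (2*σ^2) - 1/2 - 1/(2*σ)) * (1 - Q)| ≤ d^2 / (2*σ^2) + 1/2 + 1/(2*σ) := by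
    rw [abs_mul, abs_of_nonneg (sub_nonneg.2 hQ1)]
    exact (mul_le_of_le_one_right (abs_nonneg _) (by linarith [exp_pos (-(a / σ))])).trans hA
  have hsecond : |Q * (a / σ^2)| ≤ exp (-1) / σ := by
    have hQa : Q * (a / σ^2) = (a / σ) * Q / σ := by
      field_simp
    rw [abs_of_nonneg (by positivity), hQa]
    gcongr
    exact mul_exp_neg_le_exp_neg_one _
  calc _ ≤ |(d^2 / (2*σ^2) - 1/2 - 1/(2*σ)) * (1 - Q)| + |Q * (a / σ^2)| := abs_sub _ _
    _ ≤ d^2 / (2*σ^2) + 1/2 + 1/(2*σ) + exp (-1) / σ := add_le_add hfirst hsecond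
    _ = (σ*(1+σ) + d^2 + 2*σ/exp 1) / (2*σ^2) := by
      rw [exp_neg]
      field_simp
      ring

end Kap

open Kap in
theorem kap_time_deriv_bound (σ x y : ℝ) (hσ : 0 < σ) (hx : 0 < x) (hy : 0 < y) :
    |deriv (fun s => kap s y x) σ| ≤
      Real.exp (-(y-x)^2/(2*σ) - (y-x) - σ/2) / (2 * Real.sqrt (2*Real.pi*σ^5)) *
        (σ*(1+σ) + (y-x)^2 + 2*σ/Real.exp 1) := by
  have hderiv : HasDerivAt (fun s => kap s y x) _ σ :=
    (hasDerivAt_gaussFactor (y - x) hσ).mul (hasDerivAt_one_sub_exp_neg_div (2*x*y) hσ.ne')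
  have hG := gaussFactor_pos (y - x) hσ
  calc |deriv (fun s => kap s y x) σ|
      = gaussFactor (y - x) σ * |((y - x)^2 / (2*σ^2) - 1/2 - 1/(2*σ)) *
          (1 - exp (-(2*x*y) / σ)) - exp (-(2*x*y) / σ) * (2*x*y / σ^2)| := by
        rw [hderiv.deriv, ← abs_of_pos hG, ← abs_mul, abs_of_pos hG]
        congr 1
        ring
    _ ≤ gaussFactor (y - x) σ * ((σ*(1+σ) + (y-x)^2 + 2*σ/exp 1) / (2*σ^2)) :=
        mul_le_mul_of_nonneg_left (abs_kapDerivFactor_le _ (by positivity) hσ) hG.le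
    _ = _ := by
        rw [gaussFactor_eq _ hσ]
        field_simp
end

section
/- For every Λ > 0 there exists σ† > 0 such that σ ↦ h(σ,Λ) is strictly convex on (0, σ†), h(σ,Λ) → 0 as σ → 0⁺, and h is strictly increasing on (0, σ†); moreover σ† can be chosen with σ† < σ* = (-3 + √(9 + 4Λ²))/2. -/
/-!
For `Λ, σ > 0` write `h(σ, Λ) = exp L(σ)` with
`L(σ) = log (Λ / √(2π)) - Λ² / (2σ) + Λ - σ / 2 - (3/2) log σ`, so that
`L'(σ) = (Λ² - σ² - 3σ) / (2σ²)` and `h'' = h (L'' + L'²)`.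
Hence `h` increases as long as `σ² + 3σ < Λ²`, i.e. up to `σ*`, and `L'' + L'² > 0` as soon as
`σ² + 3σ ≤ Λ² / 2` and `σ < Λ² / 16`; both hold below `σ† = min (Λ / 2) (Λ² / 16)`.
As `σ → 0⁺` the term `-Λ² / (2σ)` drives `L` to `-∞`, so `h → 0`.
-/

open Real MeasureTheory Set Filter Topology

theorem strictConvexOn_exp_comp_of_hasDerivAt {s : Set ℝ} (hs : Convex ℝ s) (hso : IsOpen s)
    {V V' V'' : ℝ → ℝ} (hV : ∀ x ∈ s, HasDerivAt V (V' x) x)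
    (hV' : ∀ x ∈ s, HasDerivAt V' (V'' x) x) (hpos : ∀ x ∈ s, 0 < V'' x + V' x ^ 2) :
    StrictConvexOn ℝ s (fun x => exp (V x)) := by
  refine strictConvexOn_of_deriv2_pos hs
    (fun x hx => (hV x hx).exp.continuousAt.continuousWithinAt) fun x hx => ?_
  rw [hso.interior_eq] at hx
  have hderiv : deriv (fun x => exp (V x)) =ᶠ[𝓝 x] fun y => exp (V y) * V' y := by
    filter_upwards [hso.mem_nhds hx] with y hy using (hV y hy).exp.deriv
  have hderiv2 : HasDerivAt (fun y => exp (V y) * V' y) (exp (V x) * (V'' x + V' x ^ 2)) x :=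
    ((hV x hx).exp.mul (hV' x hx)).congr_deriv (by ring)
  rw [Function.iterate_succ_apply', Function.iterate_one, hderiv.deriv_eq, hderiv2.deriv]
  exact mul_pos (exp_pos (V x)) (hpos x hx)

noncomputable def logFph (x σ : ℝ) : ℝ :=
  log (x / √(2 * π)) - x ^ 2 / (2 * σ) + x - σ / 2 - 3 / 2 * log σ

noncomputable def logFphDeriv (x σ : ℝ) : ℝ := (x ^ 2 - σ ^ 2 - 3 * σ) / (2 * σ ^ 2)

noncomputable def logFphDeriv2 (x σ : ℝ) : ℝ := (3 * σ - 2 * x ^ 2) / (2 * σ ^ 3)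

theorem fph_eq_exp_logFph {x σ : ℝ} (hx : 0 < x) (hσ : 0 < σ) :
    fph σ x = exp (logFph x σ) := by
  have hsqrt : √(2 * π * σ ^ 3) = √(2 * π) * exp (3 / 2 * log σ) := by
    rw [sqrt_mul (by positivity), sqrt_eq_rpow (σ ^ 3), rpow_def_of_pos (by positivity), log_pow]
    ring_nf
  have hexp : exp (logFph x σ) = x / √(2 * π) * exp (-(x - σ) ^ 2 / (2 * σ))
      / exp (3 / 2 * log σ) := by
    rw [← exp_log (show 0 < x / √(2 * π) by positivity), ← exp_add, ← exp_sub, logFph]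
    congr 1
    field_simp
    ring
  rw [fph, hsqrt, hexp]
  field_simp

theorem hasDerivAt_logFph (x : ℝ) {σ : ℝ} (hσ : 0 < σ) :
    HasDerivAt (logFph x) (logFphDeriv x σ) σ := by
  have hfun : logFph x =
      fun τ => log (x / √(2 * π)) + -x ^ 2 / 2 * τ⁻¹ + x - τ / 2 - 3 / 2 * log τ := by
    funext τ
    rw [logFph]
    ring
  rw [hfun]
  refine ((((((hasDerivAt_inv hσ.ne').const_mul _).const_add _).add_const x).fun_sub
    ((hasDerivAt_id' σ).div_const 2)).fun_sub ((hasDerivAt_log hσ.ne').const_mul _)).congr_deriv ?_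
  rw [logFphDeriv]
  field_simp

theorem hasDerivAt_logFphDeriv (x : ℝ) {σ : ℝ} (hσ : σ ≠ 0) :
    HasDerivAt (logFphDeriv x) (logFphDeriv2 x σ) σ := by
  refine ((((hasDerivAt_pow 2 σ).const_sub (x ^ 2)).fun_sub
    ((hasDerivAt_id' σ).const_mul 3)).fun_div ((hasDerivAt_pow 2 σ).const_mul 2)
    (by simp [hσ])).congr_deriv ?_
  rw [logFphDeriv2]
  field_simp
  ring

theorem tendsto_logFph_atBot {x : ℝ} (hx : x ≠ 0) : Tendsto (logFph x) (𝓝[>] 0) atBot := by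
  set q : ℝ → ℝ := fun σ =>
    -x ^ 2 / 2 + (log (x / √(2 * π)) + x) * σ - σ ^ 2 / 2 - 3 / 2 * (σ * log σ)
  have hq : Tendsto q (𝓝[>] 0) (𝓝 (-x ^ 2 / 2)) := by
    have := tendsto_nhdsWithin_of_tendsto_nhds (s := Ioi 0) ((by fun_prop : Continuous q).tendsto 0)
    simpa [q] using this
  refine (tendsto_inv_nhdsGT_zero.atTop_mul_neg (by linarith [sq_pos_of_ne_zero hx]) hq).congr'
    (eventuallyEq_nhdsWithin_of_eqOn fun σ hσ => ?_)
  have hσ : σ ≠ 0 := ne_of_gt hσ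
  simp only [q, logFph]
  field_simp
  ring

theorem tendsto_fph_nhdsGT_zero {x : ℝ} (hx : 0 < x) :
    Tendsto (fun σ => fph σ x) (𝓝[>] 0) (𝓝 0) :=
  (tendsto_exp_atBot.comp (tendsto_logFph_atBot hx.ne')).congr'
    (eventuallyEq_nhdsWithin_of_eqOn fun _ hσ => (fph_eq_exp_logFph hx hσ).symm)

theorem logFphDeriv_pos {x σ : ℝ} (hσ : 0 < σ) (h : σ ^ 2 + 3 * σ < x ^ 2) :
    0 < logFphDeriv x σ :=
  div_pos (by linarith) (by positivity)

theorem strictMonoOn_logFph {x a : ℝ} (ha : a ^ 2 + 3 * a ≤ x ^ 2) :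
    StrictMonoOn (logFph x) (Ioc 0 a) := by
  refine strictMonoOn_of_deriv_pos (convex_Ioc 0 a)
    (fun σ hσ => (hasDerivAt_logFph x hσ.1).continuousAt.continuousWithinAt) fun σ hσ => ?_
  rw [interior_Ioc] at hσ
  rw [(hasDerivAt_logFph x hσ.1).deriv]
  exact logFphDeriv_pos hσ.1 (by nlinarith [hσ.1, hσ.2])

theorem logFphDeriv2_add_sq_pos {x σ : ℝ} (hσ : 0 < σ) (h₁ : σ ^ 2 + 3 * σ ≤ x ^ 2 / 2)
    (h₂ : σ < x ^ 2 / 16) : 0 < logFphDeriv2 x σ + logFphDeriv x σ ^ 2 := by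
  set N := x ^ 2 - σ ^ 2 - 3 * σ
  have hN : (x ^ 2 / 2) ^ 2 ≤ N ^ 2 := pow_le_pow_left₀ (by positivity) (by linarith) 2
  have hdiscr : 4 * σ * x ^ 2 < N ^ 2 := by nlinarith
  have hsum : logFphDeriv2 x σ + logFphDeriv x σ ^ 2
      = (N ^ 2 + 6 * σ ^ 2 - 4 * σ * x ^ 2) / (4 * σ ^ 4) := by
    rw [logFphDeriv, logFphDeriv2]
    field_simp
    ring
  rw [hsum]
  exact div_pos (by nlinarith) (by positivity)

theorem sq_add_three_mul_le_half_sq {σ x : ℝ} (hσ : 0 ≤ σ) (h₁ : σ ≤ x / 2)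
    (h₂ : σ ≤ x ^ 2 / 16) : σ ^ 2 + 3 * σ ≤ x ^ 2 / 2 := by
  nlinarith

theorem lt_of_sq_add_three_mul_lt {σ x : ℝ} (hσ : 0 ≤ σ) (h : σ ^ 2 + 3 * σ < x ^ 2) :
    σ < (-3 + √(9 + 4 * x ^ 2)) / 2 := by
  have : 2 * σ + 3 < √(9 + 4 * x ^ 2) := (lt_sqrt (by linarith)).2 (by nlinarith)
  linarith

theorem fph_convex_increasing_near_zero (Λ : ℝ) (hΛ : 0 < Λ) :
    ∃ σd : ℝ, 0 < σd ∧ σd < (-3 + Real.sqrt (9 + 4*Λ^2))/2 ∧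
      StrictConvexOn ℝ (Set.Ioo 0 σd) (fun σ => fph σ Λ) ∧
      Filter.Tendsto (fun σ => fph σ Λ) (nhdsWithin 0 (Set.Ioi 0)) (nhds 0) ∧
      StrictMonoOn (fun σ => fph σ Λ) (Set.Ioo 0 σd) := by
  set σd := min (Λ / 2) (Λ ^ 2 / 16)
  have hσd : 0 < σd := lt_min (by positivity) (by positivity)
  have hbound : ∀ σ, 0 ≤ σ → σ ≤ σd → σ ^ 2 + 3 * σ ≤ Λ ^ 2 / 2 := fun σ h₀ h₁ =>
    sq_add_three_mul_le_half_sq h₀ (h₁.trans (min_le_left _ _)) (h₁.trans (min_le_right _ _))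
  have hσd_bound : σd ^ 2 + 3 * σd ≤ Λ ^ 2 / 2 := hbound σd hσd.le le_rfl
  have hfph : EqOn (fun σ => exp (logFph Λ σ)) (fun σ => fph σ Λ) (Ioo 0 σd) :=
    fun σ hσ => (fph_eq_exp_logFph hΛ hσ.1).symm
  refine ⟨σd, hσd, lt_of_sq_add_three_mul_lt hσd.le (by linarith [pow_pos hΛ 2]), ?_,
    tendsto_fph_nhdsGT_zero hΛ, ?_⟩
  · refine (strictConvexOn_exp_comp_of_hasDerivAt (convex_Ioo 0 σd) isOpen_Ioo
      (fun σ hσ => hasDerivAt_logFph Λ hσ.1) (fun σ hσ => hasDerivAt_logFphDeriv Λ hσ.1.ne')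
      fun σ hσ => ?_).congr hfph
    exact logFphDeriv2_add_sq_pos hσ.1 (hbound σ hσ.1.le hσ.2.le)
      (hσ.2.trans_le (min_le_right _ _))
  · exact (exp_strictMono.comp_strictMonoOn
      ((strictMonoOn_logFph (by linarith [pow_pos hΛ 2])).mono Ioo_subset_Ioc_self)).congr hfph
end
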